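/- Let n ≥ 2, let a = (a_1,…,a_n) be a tuple of integers with each a_i ≥ 2, and for k = 1,…,n set q_k := μ(a_{k+1},…,a_n)·d(a_1,…,a_{k−1}) (with μ of the empty tuple equal to 1 and d of the empty tuple equal to 1). Then for every t ∈ ℂ with t ≠ 0, every ξ ∈ ℂ with ξ^{a_1 μ(a)} = t, and every (z_1,…,z_n) ∈ ℂ^n, one has g_a^{t,0}(z_1,…,z_n) = ξ^{−d(a)} · g_a(ξ^{μ(a)+q_1} z_1, ξ^{q_2} z_2, …, ξ^{q_n} z_n), where g_a := g_a^{1,0}. -/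

import Mathlib

open scoped BigOperators

/-- The signed chain polynomial (0-based indices). -/
noncomputable def chainP (n : ℕ) (a : ℕ → ℕ) (z : ℕ → ℂ) : ℂ :=
  (∑ k ∈ Finset.range (n - 1), (-1 : ℂ) ^ (k + 1) * z k ^ a k * z (k + 1))
    + (-1 : ℂ) ^ n * z (n - 1) ^ a (n - 1)

/-- The Milnor number `μ(a)` (0-based). -/
def muZ (n : ℕ) (a : ℕ → ℕ) : ℤ :=
  ∑ k ∈ Finset.range (n + 1), (-1 : ℤ) ^ k * ∏ i ∈ Finset.Ico k n, (a i : ℤ)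

/-- `d(a) = a_1 ⋯ a_n` (0-based). -/
def dd (n : ℕ) (a : ℕ → ℕ) : ℕ := ∏ i ∈ Finset.range n, a i

/-- The weight `q_k = μ(a_{k+1},…,a_n) · d(a_1,…,a_{k−1})` (0-based `k`). -/
def qWeight (n : ℕ) (a : ℕ → ℕ) (k : ℕ) : ℤ :=
  muZ (n - (k + 1)) (fun i => a (k + 1 + i)) * (dd k a : ℤ)

/-- `g_a^{t,s}(z) = z_1 − s z_2 − t z_1^{a_1} z_2 − p_{−a}(z_2,…,z_n)` (0-based). -/
noncomputable def gMap (n : ℕ) (a : ℕ → ℕ) (t s : ℂ) (z : ℕ → ℂ) : ℂ :=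
  z 0 - s * z 1 - t * z 0 ^ a 0 * z 1
    - chainP (n - 1) (fun i => a (i + 1)) (fun i => z (i + 1))

/-!
Rescaling `z_i ↦ ξ ^ w_i • z_i` multiplies a monomial `∏ z_i ^ m_i` by `ξ ^ (∑ m_i w_i)`.
From `μ(a_k,…,a_n) = a_k⋯a_n − μ(a_{k+1},…,a_n)` one gets `μ(a) + q_1 = d(a)`,
`a_k q_k + q_{k+1} = d(a)` and `a_n q_n = d(a)`, so for the weights `(μ(a) + q_1, q_2, …, q_n)`
every monomial of `g_a` has weighted degree `d(a)`, except `z_1^{a_1} z_2`, whose degree exceeds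
`d(a)` by `a_1 μ(a)`: that excess produces the coefficient `ξ^{a_1 μ(a)} = t`.
-/

lemma muZ_zero (b : ℕ → ℕ) : muZ 0 b = 1 := by simp [muZ]

lemma muZ_succ (m : ℕ) (b : ℕ → ℕ) :
    muZ (m + 1) b = ∏ i ∈ Finset.range (m + 1), (b i : ℤ) - muZ m (fun i => b (i + 1)) := by
  unfold muZ
  rw [Finset.sum_range_succ', Finset.range_eq_Ico]
  simp only [← Finset.prod_Ico_add', pow_succ, mul_neg_one, neg_mul, Finset.sum_neg_distrib]
  ring

lemma muZ_mem_Icc (m : ℕ) (b : ℕ → ℕ) (hb : ∀ i < m, 2 ≤ b i) :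
    muZ m b ∈ Set.Icc 1 (∏ i ∈ Finset.range m, (b i : ℤ)) := by
  induction m generalizing b with
  | zero => simp [muZ_zero]
  | succ m ih =>
    obtain ⟨h1, h2⟩ := ih (fun i => b (i + 1)) fun i hi => hb (i + 1) (by omega)
    have hb0 : (2 : ℤ) ≤ b 0 := by exact_mod_cast hb 0 (by omega)
    rw [muZ_succ, Finset.prod_range_succ']
    exact ⟨by nlinarith, by nlinarith⟩

lemma dd_eq_mul_prod (n : ℕ) (a : ℕ → ℕ) {k : ℕ} (hk : k < n) :
    (dd n a : ℤ) = dd k a * a k * ∏ i ∈ Finset.range (n - (k + 1)), (a (k + 1 + i) : ℤ) := by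
  obtain ⟨m, rfl⟩ : ∃ m, n = k + 1 + m := ⟨n - (k + 1), by omega⟩
  simp only [dd, Finset.prod_range_add, Finset.prod_range_succ, Nat.add_sub_cancel_left]
  push_cast
  rfl

lemma muZ_add_qWeight_zero (n : ℕ) (a : ℕ → ℕ) (hn : 1 ≤ n) :
    muZ n a + qWeight n a 0 = dd n a := by
  obtain ⟨m, rfl⟩ : ∃ m, n = m + 1 := ⟨n - 1, by omega⟩
  rw [qWeight, muZ_succ, dd_eq_mul_prod (m + 1) a (Nat.succ_pos m)]
  simp [dd, add_comm 1, Finset.prod_range_succ', mul_comm]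

lemma mul_qWeight_add_qWeight_succ (n : ℕ) (a : ℕ → ℕ) {k : ℕ} (hk : k + 1 < n) :
    a k * qWeight n a k + qWeight n a (k + 1) = dd n a := by
  obtain ⟨m, hm⟩ : ∃ m, n - (k + 1) = m + 1 := ⟨n - (k + 2), by omega⟩
  have hdd : (dd (k + 1) a : ℤ) = dd k a * a k := by simp [dd, Finset.prod_range_succ]
  rw [qWeight, qWeight, hm, muZ_succ, show n - (k + 1 + 1) = m by omega, hdd,
    dd_eq_mul_prod n a (by omega : k < n), hm]
  simp only [add_assoc, add_comm 1]
  ring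

lemma mul_qWeight_last (n : ℕ) (a : ℕ → ℕ) (hn : 1 ≤ n) :
    a (n - 1) * qWeight n a (n - 1) = dd n a := by
  rw [qWeight, show n - (n - 1 + 1) = 0 by omega, muZ_zero,
    dd_eq_mul_prod n a (by omega : n - 1 < n), show n - (n - 1 + 1) = 0 by omega]
  simp only [Finset.range_zero, Finset.prod_empty]
  ring

lemma zpow_mul_pow_mul_zpow_mul {K : Type*} [Field K] {ξ : K} (hξ : ξ ≠ 0) (e e' : ℤ) (p : ℕ)
    (u v : K) : (ξ ^ e * u) ^ p * (ξ ^ e' * v) = ξ ^ (p * e + e') * (u ^ p * v) := by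
  rw [mul_pow, ← zpow_natCast (ξ ^ e), ← zpow_mul, zpow_add₀ hξ, mul_comm e]
  ring

lemma chainP_weighted_homogeneous (m : ℕ) (b : ℕ → ℕ) (z : ℕ → ℂ) {ξ : ℂ} (hξ : ξ ≠ 0)
    (w : ℕ → ℤ) (D : ℤ) (hstep : ∀ k, k + 1 < m → b k * w k + w (k + 1) = D)
    (hlast : b (m - 1) * w (m - 1) = D) :
    chainP m b (fun i => ξ ^ w i * z i) = ξ ^ D * chainP m b z := by
  have hsum : ∀ k ∈ Finset.range (m - 1),
      (-1 : ℂ) ^ (k + 1) * (ξ ^ w k * z k) ^ b k * (ξ ^ w (k + 1) * z (k + 1))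
        = ξ ^ D * ((-1 : ℂ) ^ (k + 1) * z k ^ b k * z (k + 1)) := by
    intro k hk
    rw [mul_assoc, zpow_mul_pow_mul_zpow_mul hξ,
      hstep k (by have := Finset.mem_range.mp hk; omega)]
    ring
  have hend : (ξ ^ w (m - 1) * z (m - 1)) ^ b (m - 1) = ξ ^ D * z (m - 1) ^ b (m - 1) := by
    simpa [hlast] using zpow_mul_pow_mul_zpow_mul hξ (w (m - 1)) 0 (b (m - 1)) (z (m - 1)) 1
  rw [chainP, chainP, Finset.sum_congr rfl hsum, ← Finset.mul_sum, hend]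
  ring

lemma gMap_weighted (n : ℕ) (hn : 2 ≤ n) (a : ℕ → ℕ) (z : ℕ → ℂ) {ξ : ℂ} (hξ : ξ ≠ 0)
    (e : ℕ → ℤ) (D c : ℤ) (h0 : e 0 = D) (h1 : a 0 * e 0 + e 1 = D + c)
    (hstep : ∀ k, k + 2 < n → a (k + 1) * e (k + 1) + e (k + 2) = D)
    (hlast : a (n - 1) * e (n - 1) = D) :
    gMap n a 1 0 (fun i => ξ ^ e i * z i) = ξ ^ D * gMap n a (ξ ^ c) 0 z := by
  have hchain := chainP_weighted_homogeneous (n - 1) (fun i => a (i + 1)) (fun i => z (i + 1)) hξ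
    (fun i => e (i + 1)) D (fun k hk => hstep k (by omega))
    (by rw [show n - 1 - 1 + 1 = n - 1 by omega]; exact hlast)
  have hlead := zpow_mul_pow_mul_zpow_mul hξ (e 0) (e 1) (a 0) (z 0) (z 1)
  rw [h1] at hlead
  simp only [gMap, one_mul, zero_mul, sub_zero]
  rw [hlead, hchain, h0, zpow_add₀ hξ]
  ring

/-- For `t ≠ 0` and `ξ` with `ξ^{a_1 μ(a)} = t`,
`g_a^{t,0}(z) = ξ^{−d(a)} g_a(ξ^{μ(a)+q_1} z_1, ξ^{q_2} z_2, …, ξ^{q_n} z_n)`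
where `g_a = g_a^{1,0}`. -/
theorem stmt_8 (n : ℕ) (hn : 2 ≤ n) (a : ℕ → ℕ) (ha : ∀ i < n, 2 ≤ a i)
    (t : ℂ) (ht : t ≠ 0) (ξ : ℂ) (hξ : ξ ^ ((a 0 : ℤ) * muZ n a) = t)
    (z : ℕ → ℂ) :
    gMap n a t 0 z
      = ξ ^ (-(dd n a : ℤ))
          * gMap n a 1 0
              (fun i => ξ ^ (if i = 0 then muZ n a + qWeight n a 0 else qWeight n a i)
                * z i) := by
  have hexp : (a 0 : ℤ) * muZ n a ≠ 0 :=
    mul_ne_zero (by have := ha 0 (by omega); positivity)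
      ((muZ_mem_Icc n a ha).1.trans_lt' one_pos).ne'
  have hξ0 : ξ ≠ 0 := by
    rintro rfl
    exact ht (hξ ▸ zero_zpow _ hexp)
  rw [gMap_weighted n hn a z hξ0 _ (dd n a) ((a 0 : ℤ) * muZ n a) ?_ ?_ ?_ ?_, hξ, ← mul_assoc,
    ← zpow_add₀ hξ0, neg_add_cancel, zpow_zero, one_mul]
  · simpa using muZ_add_qWeight_zero n a (by omega)
  · simp only [if_pos, one_ne_zero, if_false]
    linear_combination mul_qWeight_add_qWeight_succ n a (k := 0) (by omega)
  · exact fun k hk => by simpa using mul_qWeight_add_qWeight_succ n a (k := k + 1) (by omega)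
  · simpa [show n - 1 ≠ 0 by omega] using mul_qWeight_last n a (by omega)
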